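/- Let G = (V, E) be a hedgegraph with connectivity λ > 0 and hedgegraph polymatroid f. Then the functional strength satisfies k*(f) ≤ λ. -/

import Mathlib

open Finset

attribute [local instance] Classical.propDecidable

noncomputable section

variable {V E : Type*}

/-- The simple graph on `V` induced by the hyperedges of the hedges in `A`. -/
def hgGraph (hedge : E → Finset (Finset V)) (A : Finset E) : SimpleGraph V where
  Adj u v := u ≠ v ∧ ∃ e ∈ A, ∃ h ∈ hedge e, u ∈ h ∧ v ∈ h
  symm := by
    constructor
    rintro u v ⟨hne, e, he, h, hh, hu, hv⟩
    exact ⟨hne.symm, e, he, h, hh, hv, hu⟩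
  loopless := by constructor; rintro u ⟨hne, -⟩; exact hne rfl

/-- Number of connected components of the sub-hedgegraph `(V, A)`. -/
def comps (hedge : E → Finset (Finset V)) (A : Finset E) : ℕ :=
  Nat.card (hgGraph hedge A).ConnectedComponent

/-- The hedgegraph polymatroid `f(A) = |V| - #Comps(V,A)`. -/
def fH [Fintype V] (hedge : E → Finset (Finset V)) (A : Finset E) : ℕ :=
  Fintype.card V - comps hedge A

/-- Hedges crossing the vertex set `S`. -/
def vertexCut [Fintype V] [DecidableEq V] [Fintype E]
    (hedge : E → Finset (Finset V)) (S : Finset V) : Finset E :=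
  univ.filter fun e => ∃ h ∈ hedge e, (h ∩ S).Nonempty ∧ (h ∩ (univ \ S)).Nonempty

/-- Connectivity of the hedgegraph: the minimum size of `δ(S)` over nonempty proper
vertex sets `S`. -/
def hconnectivity [Fintype V] [DecidableEq V] [Fintype E]
    (hedge : E → Finset (Finset V)) : ℕ :=
  sInf {k | ∃ S : Finset V, S.Nonempty ∧ S ≠ univ ∧ k = (vertexCut hedge S).card}

/-- The contraction of the one-hedge hedgegraph `(V,{e})` along the partition `P`: the
graph on the parts of `P`, two parts being adjacent if some hyperedge of `e` meets
both. -/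
def contractGraph [Fintype V] [DecidableEq V] (hedge : E → Finset (Finset V)) (e : E)
    (P : Finpartition (univ : Finset V)) : SimpleGraph {p // p ∈ P.parts} where
  Adj p q := p ≠ q ∧ ∃ h ∈ hedge e, (h ∩ p.1).Nonempty ∧ (h ∩ q.1).Nonempty
  symm := by constructor; rintro p q ⟨hne, h, hh, hp, hq⟩; exact ⟨hne.symm, h, hh, hq, hp⟩
  loopless := by constructor; rintro p ⟨hne, -⟩; exact hne rfl

/-- `#Comps(P(e))`: number of connected components of the contraction of `(V,{e})`
along `P`. -/
def compsContract [Fintype V] [DecidableEq V] (hedge : E → Finset (Finset V)) (e : E)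
    (P : Finpartition (univ : Finset V)) : ℕ :=
  Nat.card (contractGraph hedge e P).ConnectedComponent

/-- Weak partition connectivity. -/
def wpc [Fintype V] [DecidableEq V] [Fintype E] (hedge : E → Finset (Finset V)) : ℕ :=
  sInf {k | ∃ P : Finpartition (univ : Finset V), 2 ≤ P.parts.card ∧
    k = (∑ e : E, (P.parts.card - compsContract hedge e P)) / (P.parts.card - 1)}

/-- Functional strength of the hedgegraph polymatroid. -/
def kstar [Fintype V] [DecidableEq V] [Fintype E] [DecidableEq E]
    (hedge : E → Finset (Finset V)) : ℕ :=
  sInf {k | ∃ A : Finset E, fH hedge A < fH hedge (univ : Finset E) ∧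
    k = (∑ e : E, (fH hedge (insert e A) - fH hedge A)) /
      (fH hedge (univ : Finset E) - fH hedge A)}


/-! Let `S` attain the connectivity `λ > 0` and put `A := E \ δ(S)`. No hyperedge of a hedge in
`A` crosses `S`, while some hedge of `δ(S)` does, so `(V, A)` has more components than `(V, E)`
and `f(A) < f(E)`. Every marginal `f(A ∪ {e}) - f(A)` is at most `f(E) - f(A)` by monotonicity
and vanishes for `e ∈ A`, so the ratio defining `k*(f)` at `A` is at most `|E \ A| = λ`. -/

theorem SimpleGraph.ConnectedComponent.card_lt_card_of_le_of_not_reachable {W : Type*}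
    [Finite W] {G G' : SimpleGraph W} (h : G ≤ G') {x y : W} (hxy : G'.Reachable x y)
    (hnxy : ¬G.Reachable x y) :
    Nat.card G'.ConnectedComponent < Nat.card G.ConnectedComponent := by
  by_contra! hle
  have hinj := ((ConnectedComponent.surjective_map_ofLE h).bijective_of_nat_card_le hle).1
  refine hnxy (ConnectedComponent.eq.1 (hinj ?_))
  exact ConnectedComponent.sound hxy

section Hedgegraph

variable (hedge : E → Finset (Finset V))

lemma hgGraph_mono {A B : Finset E} (hAB : A ⊆ B) : hgGraph hedge A ≤ hgGraph hedge B := by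
  rintro u v ⟨hne, e, he, h, hh, hu, hv⟩
  exact ⟨hne, e, hAB he, h, hh, hu, hv⟩

variable [Fintype V]

lemma comps_le_card (A : Finset E) : comps hedge A ≤ Fintype.card V := by
  rw [← Nat.card_eq_fintype_card]
  exact Nat.card_le_card_of_surjective _ Quot.mk_surjective

lemma comps_anti {A B : Finset E} (hAB : A ⊆ B) : comps hedge B ≤ comps hedge A :=
  SimpleGraph.ConnectedComponent.card_le_card_of_le (hgGraph_mono hedge hAB)

lemma fH_mono {A B : Finset E} (hAB : A ⊆ B) : fH hedge A ≤ fH hedge B :=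
  Nat.sub_le_sub_left (comps_anti hedge hAB) _

lemma fH_lt_fH_of_comps_lt {A B : Finset E} (h : comps hedge B < comps hedge A) :
    fH hedge A < fH hedge B := by
  have := comps_le_card hedge A
  unfold fH
  omega

variable [DecidableEq V] [Fintype E]

lemma exists_adj_of_mem_vertexCut {S : Finset V} {A : Finset E} {e : E} (heA : e ∈ A)
    (he : e ∈ vertexCut hedge S) : ∃ x ∈ S, ∃ y ∉ S, (hgGraph hedge A).Adj x y := by
  obtain ⟨h, hh, ⟨x, hx⟩, ⟨y, hy⟩⟩ := (mem_filter.1 he).2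
  rw [mem_inter] at hx
  rw [mem_inter, mem_sdiff] at hy
  exact ⟨x, hx.2, y, hy.2.2, ne_of_mem_of_not_mem hx.2 hy.2.2, e, heA, h, hh, hx.1, hy.1⟩

lemma exists_vertexCut_card_eq_hconnectivity (h : 0 < hconnectivity hedge) :
    ∃ S : Finset V, (vertexCut hedge S).card = hconnectivity hedge := by
  obtain ⟨S, -, -, hS⟩ := Nat.sInf_mem (Nat.nonempty_of_pos_sInf h)
  exact ⟨S, hS.symm⟩

variable [DecidableEq E]

lemma not_reachable_sdiff_vertexCut {S : Finset V} {x y : V} (hx : x ∈ S) (hy : y ∉ S) :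
    ¬(hgGraph hedge (univ \ vertexCut hedge S)).Reachable x y := by
  rintro ⟨p⟩
  obtain ⟨d, -, hd, hd'⟩ := p.exists_boundary_dart (S : Set V) hx hy
  obtain ⟨-, e, he, h, hh, h₁, h₂⟩ := d.adj
  refine (mem_sdiff.1 he).2 (mem_filter.2 ⟨mem_univ e, h, hh, ⟨_, mem_inter.2 ⟨h₁, hd⟩⟩, ?_⟩)
  exact ⟨_, mem_inter.2 ⟨h₂, mem_sdiff.2 ⟨mem_univ _, hd'⟩⟩⟩

lemma comps_lt_comps_sdiff_vertexCut {S : Finset V} (hS : (vertexCut hedge S).Nonempty) :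
    comps hedge univ < comps hedge (univ \ vertexCut hedge S) := by
  obtain ⟨e, he⟩ := hS
  obtain ⟨x, hx, y, hy, hxy⟩ := exists_adj_of_mem_vertexCut hedge (mem_univ e) he
  exact SimpleGraph.ConnectedComponent.card_lt_card_of_le_of_not_reachable
    (hgGraph_mono hedge (subset_univ _)) hxy.reachable (not_reachable_sdiff_vertexCut hedge hx hy)

lemma kstar_le_card_sdiff {A : Finset E} (hA : fH hedge A < fH hedge univ) :
    kstar hedge ≤ (univ \ A).card := by
  set d := fH hedge univ - fH hedge A
  have hsum : ∑ e : E, (fH hedge (insert e A) - fH hedge A) ≤ d * (univ \ A).card := calc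
    ∑ e : E, (fH hedge (insert e A) - fH hedge A)
        = ∑ e ∈ univ \ A, (fH hedge (insert e A) - fH hedge A) :=
          (sum_subset (subset_univ _) fun e _ he ↦ by
            rw [insert_eq_of_mem (by simpa using he), Nat.sub_self]).symm
    _ ≤ ∑ _e ∈ univ \ A, d :=
          sum_le_sum fun e _ ↦ Nat.sub_le_sub_right (fH_mono hedge (subset_univ _)) _
    _ = d * (univ \ A).card := by rw [sum_const, smul_eq_mul, mul_comm]
  calc kstar hedge ≤ (∑ e : E, (fH hedge (insert e A) - fH hedge A)) / d :=
        Nat.sInf_le ⟨A, hA, rfl⟩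
    _ ≤ (univ \ A).card := Nat.div_le_of_le_mul hsum

end Hedgegraph

/-- For a hedgegraph with connectivity `λ > 0`, the functional
strength of the hedgegraph polymatroid satisfies `k*(f) ≤ λ`. -/
theorem functional_strength_le_connectivity [Fintype V] [DecidableEq V]
    [Fintype E] [DecidableEq E] (hedge : E → Finset (Finset V))
    (hl : 0 < hconnectivity hedge) :
    kstar hedge ≤ hconnectivity hedge := by
  obtain ⟨S, hS⟩ := exists_vertexCut_card_eq_hconnectivity hedge hl
  have hcut : (vertexCut hedge S).Nonempty := card_pos.1 (hS ▸ hl)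
  have hlt : fH hedge (univ \ vertexCut hedge S) < fH hedge univ :=
    fH_lt_fH_of_comps_lt hedge (comps_lt_comps_sdiff_vertexCut hedge hcut)
  calc kstar hedge ≤ (univ \ (univ \ vertexCut hedge S)).card := kstar_le_card_sdiff hedge hlt
    _ = hconnectivity hedge := by rw [Finset.sdiff_sdiff_eq_self (subset_univ _), hS]

end
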